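/- For every n ≥ 1, the evaluation of H_n at 1 equals p'_{n−1}; moreover, in the ring of formal power series in y over ℤ: (1 − y² − y³) · ∑_{n≥0} p'_n y^n = 1 + 2y + 2y². -/

import Mathlib

open Polynomial

/-- The maximal cube polynomials `H n` of the matchable Lucas cubes. -/
noncomputable def H : ℕ → Polynomial ℤ
  | 0 => 1
  | 1 => X
  | 2 => 2 * X
  | 3 => 3 * X
  | 4 => X + 2 * X ^ 2
  | (n + 5) => X * H (n + 3) + X * H (n + 2)

/-- The (1,2,3)-Padovan numbers. -/
def p' : ℕ → ℤ
  | 0 => 1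
  | 1 => 2
  | 2 => 3
  | (n + 3) => p' (n + 1) + p' n

/-- At `x = 1` the recurrence of `H` is the Padovan recurrence, and it extends to the
explicitly given `H 4`. -/
theorem eval_one_H_add_four (n : ℕ) :
    (H (n + 4)).eval 1 = (H (n + 2)).eval 1 + (H (n + 1)).eval 1 := by
  cases n with
  | zero => norm_num [H]
  | succ n => simp [H]

theorem eval_one_H_succ (n : ℕ) : (H (n + 1)).eval 1 = p' n := by
  induction n using p'.induct with
  | case1 | case2 | case3 => norm_num [H, p']
  | case4 n ih₁ ih₀ => rw [eval_one_H_add_four, ih₁, ih₀, p']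

namespace PowerSeries

theorem one_sub_X_sq_sub_X_cube_mul_mk {R : Type*} [CommRing R] {a : ℕ → R}
    (ha : ∀ n, a (n + 3) = a (n + 1) + a n) :
    (1 - X ^ 2 - X ^ 3) * mk a = C (a 0) + C (a 1) * X + C (a 2 - a 0) * X ^ 2 := by
  ext n
  rw [sub_mul, sub_mul, one_mul]
  rcases n with _ | _ | _ | n <;>
    simp [coeff_X_pow_mul', coeff_mul_X_pow', coeff_C, ha]

end PowerSeries

theorem eval_H_one_and_gf_padovan :
    (∀ n : ℕ, 1 ≤ n → (H n).eval 1 = p' (n - 1)) ∧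
    (1 - PowerSeries.X ^ 2 - PowerSeries.X ^ 3) * PowerSeries.mk p'
      = 1 + 2 * PowerSeries.X + 2 * PowerSeries.X ^ 2 := by
  refine ⟨fun n hn => ?_, ?_⟩
  · obtain ⟨m, rfl⟩ := Nat.exists_eq_add_of_le' hn
    exact eval_one_H_succ m
  · rw [PowerSeries.one_sub_X_sq_sub_X_cube_mul_mk (a := p') fun n => rfl]
    simp [p']
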